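/- In a finite MDP with a bounded reward function and a finite action space, there exists an optimal policy that is stationary and deterministic; that is, the supremum of the expected discounted return (with discount factor γ ∈ [0,1)) over all policies is attained by a stationary deterministic policy. -/

import Mathlib

/-!
The optimal Bellman operator `T* V s = maxₐ (r s a + γ ∑ P s a s' V s')` is monotone and
shifts constants by a factor `γ`, hence (Blackwell) a `γ`-contraction for the sup distance.
By induction on the horizon, every finite-horizon return of every policy is bounded by the
corresponding iterate `T*ⁿ 0`, so every limit return is at most the fixed point `V*`. A policy
greedy with respect to `V*` has `V*` as the fixed point of its own contracting Bellman
operator, whose iterates from `0` are exactly its finite-horizon returns.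
-/

open Filter Topology

/-- Finite-horizon expected discounted return of a (randomized, history-dependent)
policy `π : List S → A → ℝ`, where the policy is evaluated on the history of visited
states with the current state at the head. -/
noncomputable def VfinHist {S A : Type} [Fintype S] [Fintype A]
    (P : S → A → S → ℝ) (r : S → A → ℝ) (γ : ℝ) (π : List S → A → ℝ) :
    ℕ → List S → S → ℝ
  | 0, _, _ => 0
  | n + 1, h, s =>
      ∑ a : A, π (s :: h) a *
        (r s a + γ * ∑ s' : S, P s a s' * VfinHist P r γ π n (s :: h) s')

/-- The (randomized, history-dependent) policy induced by a stationary
deterministic policy `σ : S → A`. -/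
noncomputable def statDetPolicy {S A : Type} [DecidableEq A] (σ : S → A) :
    List S → A → ℝ
  | [], _ => 0
  | s :: _, a => if a = σ s then 1 else 0

theorem lipschitzWith_of_monotone_of_map_add_const_le {ι : Type*} [Fintype ι]
    {F : (ι → ℝ) → ι → ℝ} (K : NNReal) (hmono : Monotone F)
    (hshift : ∀ V (c : ℝ), 0 ≤ c → F (V + fun _ => c) ≤ F V + fun _ => K * c) :
    LipschitzWith K F := by
  have hle : ∀ V W i, F V i ≤ F W i + K * dist V W := by
    intro V W i
    have hVW : V ≤ W + fun _ => dist V W := fun j => by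
      have := (le_abs_self _).trans
        ((Real.dist_eq (V j) (W j)).symm.trans_le (dist_le_pi_dist V W j))
      simp only [Pi.add_apply]
      linarith
    exact (hmono hVW i).trans (hshift W _ dist_nonneg i)
  refine LipschitzWith.of_dist_le_mul fun V W => ?_
  refine (dist_pi_le_iff (by positivity)).2 fun i => ?_
  rw [Real.dist_eq, abs_sub_le_iff]
  have hWV := hle W V i
  rw [dist_comm] at hWV
  constructor <;> linarith [hle V W i]

section Bellman

variable {S A : Type} [Fintype S] (P : S → A → S → ℝ) (r : S → A → ℝ) (γ : ℝ)

noncomputable def actionValue (V : S → ℝ) (s : S) (a : A) : ℝ :=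
  r s a + γ * ∑ s' : S, P s a s' * V s'

noncomputable def bellmanOptimal [Fintype A] [Nonempty A] (V : S → ℝ) (s : S) : ℝ :=
  Finset.univ.sup' Finset.univ_nonempty (actionValue P r γ V s)

noncomputable def bellmanPolicy (σ : S → A) (V : S → ℝ) (s : S) : ℝ :=
  actionValue P r γ V s (σ s)

theorem exists_bellmanPolicy_eq_bellmanOptimal [Fintype A] [Nonempty A] (V : S → ℝ) :
    ∃ σ : S → A, bellmanPolicy P r γ σ V = bellmanOptimal P r γ V := by
  choose σ hσ using fun s =>
    Finset.exists_mem_eq_sup' Finset.univ_nonempty (actionValue P r γ V s)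
  exact ⟨σ, funext fun s => ((hσ s).2).symm⟩

variable {P γ}

theorem actionValue_mono (hPnn : ∀ s a s', 0 ≤ P s a s') (hγ0 : 0 ≤ γ) {V W : S → ℝ}
    (hVW : V ≤ W) (s : S) (a : A) : actionValue P r γ V s a ≤ actionValue P r γ W s a := by
  unfold actionValue
  gcongr with s' _
  · exact hPnn s a s'
  · exact hVW s'

theorem actionValue_add_const (hPsum : ∀ s a, ∑ s' : S, P s a s' = 1) (V : S → ℝ) (c : ℝ)
    (s : S) (a : A) :
    actionValue P r γ (V + fun _ => c) s a = actionValue P r γ V s a + γ * c := by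
  simp only [actionValue, Pi.add_apply, mul_add, Finset.sum_add_distrib, ← Finset.sum_mul,
    hPsum, one_mul]
  ring

theorem actionValue_le_bellmanOptimal [Fintype A] [Nonempty A] (V : S → ℝ) (s : S) (a : A) :
    actionValue P r γ V s a ≤ bellmanOptimal P r γ V s :=
  Finset.le_sup' _ (Finset.mem_univ a)

theorem lipschitzWith_bellmanOptimal [Fintype A] [Nonempty A]
    (hPnn : ∀ s a s', 0 ≤ P s a s') (hPsum : ∀ s a, ∑ s' : S, P s a s' = 1) (hγ0 : 0 ≤ γ) :
    LipschitzWith ⟨γ, hγ0⟩ (bellmanOptimal P r γ) := by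
  refine lipschitzWith_of_monotone_of_map_add_const_le _ (fun V W hVW s => ?_)
    (fun V c _ s => ?_)
  · exact Finset.sup'_le _ _ fun a _ =>
      (actionValue_mono r hPnn hγ0 hVW s a).trans (actionValue_le_bellmanOptimal r W s a)
  · refine Finset.sup'_le _ _ fun a _ => ?_
    rw [actionValue_add_const r hPsum]
    exact add_le_add_left (actionValue_le_bellmanOptimal r V s a) _

theorem lipschitzWith_bellmanPolicy
    (hPnn : ∀ s a s', 0 ≤ P s a s') (hPsum : ∀ s a, ∑ s' : S, P s a s' = 1) (hγ0 : 0 ≤ γ)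
    (σ : S → A) : LipschitzWith ⟨γ, hγ0⟩ (bellmanPolicy P r γ σ) :=
  lipschitzWith_of_monotone_of_map_add_const_le _
    (fun _ _ hVW s => actionValue_mono r hPnn hγ0 hVW s (σ s))
    (fun V c _ s => (actionValue_add_const r hPsum V c s (σ s)).le)

theorem vfinHist_succ [Fintype A] (π : List S → A → ℝ) (n : ℕ) (h : List S) (s : S) :
    VfinHist P r γ π (n + 1) h s =
      ∑ a : A, π (s :: h) a * actionValue P r γ (VfinHist P r γ π n (s :: h)) s a :=
  rfl

theorem vfinHist_statDetPolicy [Fintype A] [DecidableEq A] (σ : S → A) (n : ℕ) (h : List S)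
    (s : S) : VfinHist P r γ (statDetPolicy σ) n h s = (bellmanPolicy P r γ σ)^[n] 0 s := by
  induction n generalizing h s with
  | zero => rfl
  | succ n ih =>
    rw [vfinHist_succ, Function.iterate_succ_apply', bellmanPolicy, funext (ih (s :: h))]
    simp [statDetPolicy]

theorem vfinHist_le_iterate_bellmanOptimal [Fintype A] [Nonempty A]
    (hPnn : ∀ s a s', 0 ≤ P s a s') (hγ0 : 0 ≤ γ) (π : List S → A → ℝ)
    (hπ0 : ∀ h a, 0 ≤ π h a) (hπ1 : ∀ (h : List S) (s₀ : S), ∑ a : A, π (s₀ :: h) a = 1)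
    (n : ℕ) (h : List S) (s : S) :
    VfinHist P r γ π n h s ≤ (bellmanOptimal P r γ)^[n] 0 s := by
  induction n generalizing h s with
  | zero => rfl
  | succ n ih =>
    rw [vfinHist_succ, Function.iterate_succ_apply']
    set V := (bellmanOptimal P r γ)^[n] 0
    calc ∑ a : A, π (s :: h) a * actionValue P r γ (VfinHist P r γ π n (s :: h)) s a
        ≤ ∑ a : A, π (s :: h) a * bellmanOptimal P r γ V s := by
          gcongr with a
          · exact hπ0 _ a
          · exact (actionValue_mono r hPnn hγ0 (ih (s :: h)) s a).trans
              (actionValue_le_bellmanOptimal r V s a)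
      _ = bellmanOptimal P r γ V s := by rw [← Finset.sum_mul, hπ1, one_mul]

end Bellman

theorem exists_optimal_stationary_deterministic_policy_general
    {S A : Type} [Fintype S] [Fintype A] [Nonempty A] [DecidableEq A]
    (P : S → A → S → ℝ)
    (hPnn : ∀ s a s', 0 ≤ P s a s') (hPsum : ∀ s a, ∑ s' : S, P s a s' = 1)
    (r : S → A → ℝ)
    (γ : ℝ) (hγ0 : 0 ≤ γ) (hγ1 : γ < 1) :
    ∃ σ : S → A, ∀ s : S,
      ∃ Vstar : ℝ,
        Tendsto (fun n => VfinHist P r γ (statDetPolicy σ) n [] s) atTop (𝓝 Vstar) ∧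
        ∀ (π : List S → A → ℝ),
          (∀ h a, 0 ≤ π h a) → (∀ (h : List S) (s₀ : S), ∑ a : A, π (s₀ :: h) a = 1) →
          ∀ Vπ : ℝ,
            Tendsto (fun n => VfinHist P r γ π n [] s) atTop (𝓝 Vπ) →
            Vπ ≤ Vstar := by
  have hγ : (⟨γ, hγ0⟩ : NNReal) < 1 := hγ1
  have hT : ContractingWith _ (bellmanOptimal P r γ) :=
    ⟨hγ, lipschitzWith_bellmanOptimal r hPnn hPsum hγ0⟩
  set Vstar := ContractingWith.fixedPoint _ hT
  obtain ⟨σ, hσ⟩ := exists_bellmanPolicy_eq_bellmanOptimal P r γ Vstar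
  have hTσ : ContractingWith _ (bellmanPolicy P r γ σ) :=
    ⟨hγ, lipschitzWith_bellmanPolicy r hPnn hPsum hγ0 σ⟩
  have hfix : Vstar = ContractingWith.fixedPoint _ hTσ :=
    hTσ.fixedPoint_unique (hσ.trans hT.fixedPoint_isFixedPt)
  refine ⟨σ, fun s => ⟨Vstar s, ?_, fun π hπ0 hπ1 Vπ hVπ => ?_⟩⟩
  · simp_rw [vfinHist_statDetPolicy, hfix]
    exact tendsto_pi_nhds.1 (hTσ.tendsto_iterate_fixedPoint 0) s
  · exact le_of_tendsto_of_tendsto' hVπ (tendsto_pi_nhds.1 (hT.tendsto_iterate_fixedPoint 0) s)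
      fun n => vfinHist_le_iterate_bellmanOptimal r hPnn hγ0 π hπ0 hπ1 n [] s

/-- In a finite MDP with bounded rewards and discount factor `γ ∈ [0,1)`, the
supremum of the expected discounted return over all (randomized,
history-dependent) policies is attained by a stationary deterministic policy. -/
theorem exists_optimal_stationary_deterministic_policy
    {S A : Type} [Fintype S] [Fintype A] [Nonempty S] [Nonempty A] [DecidableEq A]
    (P : S → A → S → ℝ)
    (hPnn : ∀ s a s', 0 ≤ P s a s') (hPsum : ∀ s a, ∑ s' : S, P s a s' = 1)
    (r : S → A → ℝ) (rmax : ℝ) (hr : ∀ s a, |r s a| ≤ rmax)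
    (γ : ℝ) (hγ0 : 0 ≤ γ) (hγ1 : γ < 1) :
    ∃ σ : S → A, ∀ s : S,
      ∃ Vstar : ℝ,
        Tendsto (fun n => VfinHist P r γ (statDetPolicy σ) n [] s) atTop (𝓝 Vstar) ∧
        ∀ (π : List S → A → ℝ),
          (∀ h a, 0 ≤ π h a) → (∀ (h : List S) (s₀ : S), ∑ a : A, π (s₀ :: h) a = 1) →
          ∀ Vπ : ℝ,
            Tendsto (fun n => VfinHist P r γ π n [] s) atTop (𝓝 Vπ) →
            Vπ ≤ Vstar :=
  exists_optimal_stationary_deterministic_policy_general P hPnn hPsum r γ hγ0 hγ1
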